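/- Let E be a real inner product space, Q ⊆ E a convex set, J a nonempty finite index set, and for each j ∈ J let f_j : E → ℝ be differentiable on Q and (M_j, v_j)-Hölder smooth on Q with M_j ≥ 0 and v_j ∈ [0,1]. Let F = Σ_{j∈J} f_j, so ∇F = Σ_{j∈J} ∇f_j on Q. Then for every δ > 0, setting L(δ) = Σ_{j∈J} ((1−v_j)|J|/((1+v_j)δ))^{(1−v_j)/(1+v_j)} · M_j^{2/(1+v_j)} (with the convention that the factor ((1−v_j)|J|/((1+v_j)δ))^0 = 1 when v_j = 1), one has for all x, y ∈ Q: F(y) ≤ F(x) + ⟨∇F(x), y − x⟩ + (L(δ)/2) ‖y − x‖² + δ/2. -/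

import Mathlib

open scoped RealInnerProductSpace

private lemma young_aux {v δ s : ℝ} (hv0 : 0 ≤ v) (hv1 : v < 1) (hδ : 0 < δ) (hs : 0 ≤ s) :
    s ^ (1 + v) / (1 + v) ≤
      (((1 - v) / ((1 + v) * δ)) ^ ((1 - v) / (1 + v)) * s ^ 2 + δ) / 2 := by
  have ha : (0:ℝ) < 1 + v := by linarith
  have hb : (0:ℝ) < 1 - v := by linarith
  set K : ℝ := ((1 - v) / ((1 + v) * δ)) ^ ((1 - v) / (1 + v)) with hK
  have hKpos : 0 < K := Real.rpow_pos_of_pos (by positivity) _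
  rcases eq_or_lt_of_le hs with h | hspos
  · rw [← h, Real.zero_rpow (by positivity)]
    simp only [zero_div, ne_eq, OfNat.ofNat_ne_zero, not_false_eq_true, zero_pow, mul_zero,
      zero_add]
    positivity
  · have hamgm := Real.geom_mean_le_arith_mean2_weighted
      (w₁ := (1 + v) / 2) (w₂ := (1 - v) / 2)
      (p₁ := K * s ^ 2 / (1 + v)) (p₂ := δ / (1 - v))
      (by positivity) (by positivity) (by positivity) (by positivity) (by ring)
    have key : (K * s ^ 2 / (1 + v)) ^ ((1 + v) / 2) * (δ / (1 - v)) ^ ((1 - v) / 2)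
        = s ^ (1 + v) / (1 + v) := by
      have h1 : (0:ℝ) < K * s ^ 2 / (1 + v) := by positivity
      have h2 : (0:ℝ) < (K * s ^ 2 / (1 + v)) ^ ((1 + v) / 2) * (δ / (1 - v)) ^ ((1 - v) / 2) := by
        positivity
      have h3 : (0:ℝ) < s ^ (1 + v) / (1 + v) := by positivity
      apply Real.log_injOn_pos (Set.mem_Ioi.2 h2) (Set.mem_Ioi.2 h3)
      rw [Real.log_mul (by positivity) (by positivity), Real.log_rpow h1,
        Real.log_rpow (by positivity), Real.log_div (by positivity) (by positivity),
        Real.log_mul (by positivity) (by positivity), hK,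
        Real.log_rpow (by positivity), Real.log_div (by positivity) (by positivity),
        Real.log_mul (by positivity) (by positivity),
        Real.log_pow,
        Real.log_div (ne_of_gt (Real.rpow_pos_of_pos hspos _)) (by positivity),
        Real.log_rpow hspos]
      simp only [Real.log_div hδ.ne' hb.ne']
      field_simp
      ring
    rw [key] at hamgm
    calc s ^ (1 + v) / (1 + v)
        ≤ (1 + v) / 2 * (K * s ^ 2 / (1 + v)) + (1 - v) / 2 * (δ / (1 - v)) := hamgm
      _ = (K * s ^ 2 + δ) / 2 := by field_simp

private lemma young_full {v δ M r : ℝ} (hv0 : 0 ≤ v) (hv1 : v ≤ 1) (hδ : 0 < δ) (hM : 0 ≤ M)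
    (hr : 0 ≤ r) :
    M * r ^ (1 + v) / (1 + v) ≤
      (((1 - v) / ((1 + v) * δ)) ^ ((1 - v) / (1 + v)) * M ^ (2 / (1 + v)) * r ^ 2 + δ) / 2 := by
  have ha : (0:ℝ) < 1 + v := by linarith
  rcases eq_or_lt_of_le hv1 with h1 | h1
  · -- v = 1
    subst h1
    norm_num
    linarith
  · rcases eq_or_lt_of_le hM with h2 | h2
    · -- M = 0
      rw [← h2]
      rw [Real.zero_rpow (by positivity)]
      simp only [zero_mul, mul_zero, zero_div, zero_add, zero_mul]
      positivity
    · have key := young_aux hv0 h1 hδ (s := M ^ (1 / (1 + v)) * r) (by positivity)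
      have e1 : (M ^ (1 / (1 + v)) * r) ^ (1 + v) = M * r ^ (1 + v) := by
        rw [Real.mul_rpow (by positivity) hr, ← Real.rpow_mul hM,
          one_div_mul_cancel ha.ne', Real.rpow_one]
      have e2 : (M ^ (1 / (1 + v)) * r) ^ 2 = M ^ (2 / (1 + v)) * r ^ 2 := by
        rw [mul_pow, ← Real.rpow_natCast (M ^ (1 / (1 + v))) 2, ← Real.rpow_mul hM,
          show (1 / (1 + v) * ((2:ℕ):ℝ) : ℝ) = 2 / (1 + v) by push_cast; ring]
      rw [e1, e2] at key
      linarith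

private lemma holder_descent {E : Type*} [NormedAddCommGroup E] [InnerProductSpace ℝ E]
    [CompleteSpace E] {Q : Set E} (hQ : Convex ℝ Q) {f : E → ℝ} {g : E → E} {M v : ℝ}
    (hv0 : 0 ≤ v)
    (hdiff : ∀ x ∈ Q, HasGradientAt f (g x) x)
    (hholder : ∀ x ∈ Q, ∀ y ∈ Q, ‖g x - g y‖ ≤ M * ‖x - y‖ ^ v)
    {x y : E} (hx : x ∈ Q) (hy : y ∈ Q) :
    f y ≤ f x + ⟪g x, y - x⟫ + M * ‖y - x‖ ^ (1 + v) / (1 + v) := by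
  have ha : (0:ℝ) < 1 + v := by linarith
  rcases eq_or_ne y x with rfl | hyx
  · simp [Real.zero_rpow ha.ne']
  have hr : (0:ℝ) < ‖y - x‖ := by
    simpa using sub_ne_zero.2 hyx
  set r : ℝ := ‖y - x‖ with hrdef
  set c : ℝ := ⟪g x, y - x⟫ with hc
  set C : ℝ := M * r ^ (1 + v) with hC
  set ψ : ℝ → ℝ := fun t => f (x + t • (y - x)) - t * c - C / (1 + v) * t ^ (1 + v) with hψ
  have hmem : ∀ t ∈ Set.Icc (0:ℝ) 1, x + t • (y - x) ∈ Q := by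
    intro t ht
    have h := hQ hx hy (by linarith [ht.2] : (0:ℝ) ≤ 1 - t) ht.1 (by ring)
    have : (1 - t) • x + t • y = x + t • (y - x) := by module
    rwa [this] at h
  have hline : ∀ t : ℝ, HasDerivAt (fun t : ℝ => x + t • (y - x)) (y - x) t := by
    intro t
    simpa using ((hasDerivAt_id t).smul_const (y - x)).const_add x
  have hcomp : ∀ t ∈ Set.Icc (0:ℝ) 1,
      HasDerivAt (fun t : ℝ => f (x + t • (y - x))) ⟪g (x + t • (y - x)), y - x⟫ t := by
    intro t ht
    have hfd := ((hdiff _ (hmem t ht)).hasFDerivAt).comp_hasDerivAt t (hline t)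
    simpa [InnerProductSpace.toDual_apply_apply, Function.comp_def] using hfd
  have hψderiv : ∀ t ∈ Set.Icc (0:ℝ) 1,
      HasDerivAt ψ (⟪g (x + t • (y - x)), y - x⟫ - c - C / (1 + v) * ((1 + v) * t ^ (1 + v - 1))) t := by
    intro t ht
    exact ((hcomp t ht).sub (hasDerivAt_mul_const c)).sub
      ((Real.hasDerivAt_rpow_const (Or.inr (by linarith))).const_mul (C / (1 + v)))
  have hanti : AntitoneOn ψ (Set.Icc 0 1) := by
    apply antitoneOn_of_deriv_nonpos (convex_Icc 0 1)
    · intro t ht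
      exact (hψderiv t ht).continuousAt.continuousWithinAt
    · intro t ht
      rw [interior_Icc] at ht
      exact ((hψderiv t (Set.mem_Icc_of_Ioo ht)).differentiableAt).differentiableWithinAt
    · intro t ht
      rw [interior_Icc] at ht
      rw [(hψderiv t (Set.mem_Icc_of_Ioo ht)).deriv]
      have htQ := hmem t (Set.mem_Icc_of_Ioo ht)
      have hb1 : ⟪g (x + t • (y - x)) - g x, y - x⟫ ≤ ‖g (x + t • (y - x)) - g x‖ * r :=
        real_inner_le_norm _ _
      have hb2 : ‖g (x + t • (y - x)) - g x‖ ≤ M * (t * r) ^ v := by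
        have := hholder _ htQ x hx
        have he : x + t • (y - x) - x = t • (y - x) := by abel
        rwa [he, norm_smul, Real.norm_eq_abs, abs_of_pos ht.1] at this
      have hb3 : (t * r) ^ v = t ^ v * r ^ v := Real.mul_rpow ht.1.le hr.le
      have hb4 : r ^ v * r = r ^ (1 + v) := by
        rw [add_comm, Real.rpow_add_one hr.ne']
      have hinner : ⟪g (x + t • (y - x)), y - x⟫ - c ≤ C * t ^ v := by
        have h5 : ⟪g (x + t • (y - x)), y - x⟫ - c = ⟪g (x + t • (y - x)) - g x, y - x⟫ := by
          rw [hc, inner_sub_left]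
        rw [h5, hC]
        calc ⟪g (x + t • (y - x)) - g x, y - x⟫ ≤ ‖g (x + t • (y - x)) - g x‖ * r := hb1
          _ ≤ M * (t * r) ^ v * r := by
              apply mul_le_mul_of_nonneg_right hb2 hr.le
          _ = M * r ^ (1 + v) * t ^ v := by rw [hb3, ← hb4]; ring
      have h6 : C / (1 + v) * ((1 + v) * t ^ (1 + v - 1)) = C * t ^ v := by
        rw [show (1 + v - 1) = v by ring]
        field_simp
      rw [h6]
      linarith
  have hfin := hanti (Set.left_mem_Icc.2 zero_le_one) (Set.right_mem_Icc.2 zero_le_one)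
    zero_le_one
  have hψ0 : ψ 0 = f x := by
    simp [hψ, Real.zero_rpow ha.ne']
  have hψ1 : ψ 1 = f y - c - C / (1 + v) := by
    simp [hψ]
  rw [hψ0, hψ1] at hfin
  have : C / (1 + v) = M * r ^ (1 + v) / (1 + v) := by rw [hC]
  linarith

/-- **Inexact-smoothness for heterogeneous sums.** If `F = ∑ j, f j` where each
`f j` is differentiable on a convex set `Q` with `(M j, v j)`-Hölder continuous
gradient `g j`, then for every inexactness budget `δ > 0`, splitting the budget
evenly among the summands gives the inexact quadratic upper model
`F y ≤ F x + ⟪∇F x, y - x⟫ + (L(δ)/2) ‖y - x‖² + δ/2` on `Q` with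
`L(δ) = ∑ j, ((1-v j)|J|/((1+v j)δ))^((1-v j)/(1+v j)) * (M j)^(2/(1+v j))`
(when `v j = 1` the first factor is `0 ^ 0 = 1`). -/
theorem sum_holder_smooth_inexact_quadratic_upper_bound
    {E : Type*} [NormedAddCommGroup E] [InnerProductSpace ℝ E] [CompleteSpace E]
    {J : Type*} [Fintype J] [Nonempty J]
    (Q : Set E) (hQ : Convex ℝ Q)
    (f : J → E → ℝ) (g : J → E → E) (M v : J → ℝ)
    (hM : ∀ j, 0 ≤ M j) (hv : ∀ j, v j ∈ Set.Icc (0 : ℝ) 1)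
    (hdiff : ∀ j, ∀ x ∈ Q, HasGradientAt (f j) (g j x) x)
    (hholder : ∀ j, ∀ x ∈ Q, ∀ y ∈ Q, ‖g j x - g j y‖ ≤ M j * ‖x - y‖ ^ (v j))
    (F : E → ℝ) (hF : ∀ x, F x = ∑ j, f j x)
    (gF : E → E) (hgF : ∀ x ∈ Q, gF x = ∑ j, g j x) :
    ∀ δ : ℝ, 0 < δ → ∀ x ∈ Q, ∀ y ∈ Q,
      F y ≤ F x + ⟪gF x, y - x⟫ +
        (∑ j, ((1 - v j) * (Fintype.card J : ℝ) / ((1 + v j) * δ)) ^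
              ((1 - v j) / (1 + v j)) * M j ^ (2 / (1 + v j))) / 2 *
          ‖y - x‖ ^ 2 + δ / 2 := by
  intro δ hδ x hx y hy
  set n : ℝ := (Fintype.card J : ℝ) with hn
  have hnpos : (0:ℝ) < n := by
    rw [hn]
    exact_mod_cast Fintype.card_pos
  set r : ℝ := ‖y - x‖ with hr
  have key : ∀ j, f j y ≤ f j x + ⟪g j x, y - x⟫ +
      (((1 - v j) * n / ((1 + v j) * δ)) ^ ((1 - v j) / (1 + v j)) *
        M j ^ (2 / (1 + v j))) / 2 * r ^ 2 + (δ / n) / 2 := by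
    intro j
    have h1 := holder_descent hQ (hv j).1 (hdiff j) (hholder j) hx hy
    have h2 := young_full (hv j).1 (hv j).2 (div_pos hδ hnpos) (hM j) (norm_nonneg (y - x))
    have hbase : (1 - v j) / ((1 + v j) * (δ / n)) = (1 - v j) * n / ((1 + v j) * δ) := by
      have h1v : (0:ℝ) < 1 + v j := by have := (hv j).1; linarith
      field_simp
    rw [hbase] at h2
    rw [← hr] at h1 h2
    linarith
  have hsum := Finset.sum_le_sum (fun j (_ : j ∈ Finset.univ) => key j)
  rw [hF y, hF x, hgF x hx, sum_inner]
  calc (∑ j, f j y) ≤ _ := hsum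
    _ = (∑ j, f j x) + (∑ j, ⟪g j x, y - x⟫) +
        (∑ j, ((1 - v j) * n / ((1 + v j) * δ)) ^ ((1 - v j) / (1 + v j)) *
          M j ^ (2 / (1 + v j))) / 2 * r ^ 2 + δ / 2 := by
      rw [Finset.sum_add_distrib, Finset.sum_add_distrib, Finset.sum_add_distrib,
        Finset.sum_const, Finset.card_univ, nsmul_eq_mul, ← Finset.sum_mul,
        ← Finset.sum_div]
      have : (Fintype.card J : ℝ) * (δ / n / 2) = δ / 2 := by
        rw [← hn]; field_simp
      rw [this]
    _ = _ := by rw [hr]
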